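/- arXiv:1805.10063 — 6 statements merged into one kernel-verified Lean document; each statement's English description precedes it below -/
import Mathlib

section
/- Let $\gamma\in(0,1]$. There exists a constant $C>0$ such that for all integers $m\ge 6$ and all $j$ with $3\le j\le \lfloor m/2\rfloor$, $$\frac{\binom{m}{j}\,((m-j-2)!)^{1/\gamma}\,((j-1)!)^{1/\gamma}}{((m-3)!)^{1/\gamma}\,\sqrt{m-3}\,\sqrt{m-j-2}} \le \frac{C}{j}.$$ -/
/-! Write `n = m - 3`, `k = j - 1` and `B = (n choose k)`. Since `n! = B · k! · (n - k)!`, the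
quotient equals `(m choose j) / (B ^ (1/γ) · √n · √(n - k))`, and `B ^ (1/γ) ≥ B` because
`B ≥ 1` and `1/γ ≥ 1`. Peeling three factors off `m!` gives
`(m choose j) · j · (m - j)(m - j - 1) = m(m - 1)(m - 2) · B`, and for `2j ≤ m` the cubic
`m(m - 1)(m - 2)` is at most `36 (m - j)(m - j - 1)(m - j - 2) ≤ 36 (m - j)(m - j - 1) √n √(n - k)`. -/

open Nat Real

theorem Nat.choose_add_three_succ_mul (n k : ℕ) :
    (n + 3).choose (k + 1) * (k + 1) * ((n + 2 - k) * (n + 1 - k)) =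
      (n + 3) * (n + 2) * (n + 1) * n.choose k := by
  have h₃ := add_one_mul_choose_eq (n + 2) k
  have h₂ := choose_mul_succ_eq (n + 1) k
  have h₁ := choose_mul_succ_eq n k
  calc (n + 3).choose (k + 1) * (k + 1) * ((n + 2 - k) * (n + 1 - k))
      = (n + 3) * ((n + 2).choose k * (n + 2 - k)) * (n + 1 - k) := by rw [← h₃]; ring
    _ = (n + 3) * (n + 2) * ((n + 1).choose k * (n + 1 - k)) := by rw [← h₂]; ring
    _ = (n + 3) * (n + 2) * (n + 1) * n.choose k := by rw [← h₁]; ring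

theorem Nat.factorial_rpow_eq_choose_rpow_mul (x : ℝ) {n k : ℕ} (hk : k ≤ n) :
    (n ! : ℝ) ^ x = (n.choose k : ℝ) ^ x * (k ! : ℝ) ^ x * ((n - k)! : ℝ) ^ x := by
  rw [← mul_rpow (by positivity) (by positivity), ← mul_rpow (by positivity) (by positivity)]
  exact_mod_cast congrArg (fun t : ℕ => (t : ℝ) ^ x) (choose_mul_factorial_mul_factorial hk).symm

theorem add_three_mul_add_two_mul_add_one_le {n k : ℝ} (hn : 3 ≤ n) (hk : 2 * k ≤ n + 1) :
    (n + 3) * (n + 2) * (n + 1) ≤ 36 * ((n + 2 - k) * (n + 1 - k) * (n - k)) := by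
  have h₃ : n + 3 ≤ 2 * (n + 2 - k) := by linarith
  have h₂ : n + 2 ≤ 3 * (n + 1 - k) := by linarith
  have h₁ : n + 1 ≤ 6 * (n - k) := by linarith
  calc (n + 3) * (n + 2) * (n + 1) ≤ (2 * (n + 2 - k)) * (3 * (n + 1 - k)) * (6 * (n - k)) :=
        mul_le_mul (mul_le_mul h₃ h₂ (by linarith) (by linarith)) h₁ (by linarith)
          (mul_nonneg (by linarith) (by linarith))
    _ = 36 * ((n + 2 - k) * (n + 1 - k) * (n - k)) := by ring

theorem choose_add_three_succ_mul_le {n k : ℕ} (hn : 3 ≤ n) (hk : 2 * k ≤ n + 1) :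
    ((n + 3).choose (k + 1) : ℝ) * (k + 1) ≤ 36 * (n.choose k * (√n * √(n - k))) := by
  have hkn : (k : ℝ) < n := by exact_mod_cast (show k < n by omega)
  have hsqrt : (n : ℝ) - k ≤ √n * √(n - k) := by
    calc (n : ℝ) - k = √(n - k) * √(n - k) := (mul_self_sqrt (by linarith)).symm
      _ ≤ √n * √(n - k) := by gcongr; linarith
  have hid := congrArg (Nat.cast : ℕ → ℝ) (choose_add_three_succ_mul n k)
  push_cast [Nat.cast_sub (show k ≤ n + 2 by omega), Nat.cast_sub (show k ≤ n + 1 by omega)] at hid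
  have hcubic := add_three_mul_add_two_mul_add_one_le (show (3 : ℝ) ≤ n by exact_mod_cast hn)
    (show 2 * (k : ℝ) ≤ n + 1 by exact_mod_cast hk)
  set P : ℝ := (n + 2 - k) * (n + 1 - k)
  have hP : 0 < P := mul_pos (by linarith) (by linarith)
  refine le_of_mul_le_mul_right ?_ hP
  calc ((n + 3).choose (k + 1) : ℝ) * (k + 1) * P
      = (n + 3) * (n + 2) * (n + 1) * n.choose k := hid
    _ ≤ 36 * (P * (n - k)) * n.choose k := by gcongr
    _ ≤ 36 * (P * (√n * √(n - k))) * n.choose k := by gcongr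
    _ = 36 * (n.choose k * (√n * √(n - k))) * P := by ring

theorem stmt_3 (γ : ℝ) (hγ : γ ∈ Set.Ioc (0:ℝ) 1) :
    ∃ C > 0, ∀ m j : ℕ, 6 ≤ m → 3 ≤ j → j ≤ m / 2 →
      (m.choose j : ℝ) * ((Nat.factorial (m - j - 2) : ℝ) ^ (1/γ)) *
        ((Nat.factorial (j - 1) : ℝ) ^ (1/γ)) /
      (((Nat.factorial (m - 3) : ℝ) ^ (1/γ)) * Real.sqrt ((m:ℝ) - 3) *
        Real.sqrt ((m:ℝ) - j - 2))
      ≤ C / j := by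
  refine ⟨36, by norm_num, fun m j hm hj hjm => ?_⟩
  obtain ⟨n, rfl⟩ : ∃ n, m = n + 3 := ⟨m - 3, by omega⟩
  obtain ⟨k, rfl⟩ : ∃ k, j = k + 1 := ⟨j - 1, by omega⟩
  have hkn : k < n := by omega
  rw [show n + 3 - (k + 1) - 2 = n - k by omega, add_tsub_cancel_right, add_tsub_cancel_right,
    factorial_rpow_eq_choose_rpow_mul (1 / γ) hkn.le]
  push_cast
  rw [show (n : ℝ) + 3 - 3 = n by ring, show (n : ℝ) + 3 - (k + 1) - 2 = n - k by ring]
  have hB : (1 : ℝ) ≤ n.choose k := by exact_mod_cast choose_pos hkn.le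
  have hroots : 0 < √n * √(n - k) := by
    have : (k : ℝ) < n := by exact_mod_cast hkn
    exact mul_pos (sqrt_pos.2 (by linarith)) (sqrt_pos.2 (by linarith))
  calc _ = ((n + 3).choose (k + 1) : ℝ) / ((n.choose k : ℝ) ^ (1 / γ) * (√n * √(n - k))) := by
        field_simp
    _ ≤ ((n + 3).choose (k + 1) : ℝ) / (n.choose k * (√n * √(n - k))) := by
        gcongr
        exact self_le_rpow_of_one_le hB (one_le_one_div hγ.1 hγ.2)
    _ ≤ 36 / (k + 1) := by
        rw [div_le_div_iff₀ (by positivity) (by positivity)]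
        linarith [choose_add_three_succ_mul_le (show 3 ≤ n by omega) (show 2 * k ≤ n + 1 by omega)]
end

section
/- Let $\gamma\in(0,1]$. There exists a constant $C>0$ such that for all integers $m\ge 6$ and all $j$ with $3\le j\le \lfloor m/2\rfloor$, $$\frac{\binom{m}{j}\,((j-3)!)^{1/\gamma}\,((m-j-3)!)^{1/\gamma}}{((m-3)!)^{1/\gamma}} \le C\, j^{-1-2/\gamma}.$$ -/
lemma aux_sq (n : ℕ) : (n+3)^2 ≤ 9 * 2^n := by
  induction n with
  | zero => norm_num
  | succ k ih => ring_nf; ring_nf at ih; nlinarith [ih, sq_nonneg k]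

lemma aux_central (n : ℕ) : 2^n ≤ (2*n).choose n := by
  induction n with
  | zero => simp
  | succ k ih =>
    have h1 : (2*(k+1)).choose (k+1) = (2*k+1).choose k + (2*k+1).choose (k+1) := by
      rw [show 2*(k+1) = (2*k+1)+1 by ring, Nat.choose_succ_succ']
    have h2 : (2*k+1).choose (k+1) = (2*k+1).choose k := by
      rw [← Nat.choose_symm (by omega)]; congr 1; omega
    have h3 : (2*k).choose k ≤ (2*k+1).choose k := Nat.choose_le_choose k (by omega)
    calc 2^(k+1) = 2^k + 2^k := by ring
    _ ≤ (2*k+1).choose k + (2*k+1).choose (k+1) := by rw [h2]; omega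
    _ = _ := h1.symm

lemma aux_star (j' r : ℕ) :
    ((j'+r+6).choose (j'+3) : ℝ) * ((j'+3)*(j'+2)*(j'+1)) * ((r+3)*(r+2)*(r+1))
    = ((j'+r+6)*(j'+r+5)*(j'+r+4)) * ((j'+r+3)*(j'+r+2)*(j'+r+1)) * ((j'+r).choose j') := by
  have e1 : ((j'+r+6).choose (j'+3) : ℝ) * (j'+3).factorial * (r+3).factorial
      = (j'+r+6).factorial := by
    have := Nat.choose_mul_factorial_mul_factorial (show j'+3 ≤ j'+r+6 by omega)
    rw [show j'+r+6 - (j'+3) = r+3 by omega] at this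
    exact_mod_cast this
  have e2 : ((j'+r).choose j' : ℝ) * j'.factorial * r.factorial = (j'+r).factorial := by
    have := Nat.choose_mul_factorial_mul_factorial (show j' ≤ j'+r by omega)
    rw [show j'+r - j' = r by omega] at this
    exact_mod_cast this
  have f1 : ((j'+3).factorial : ℝ) = (j'+3)*(j'+2)*(j'+1)*j'.factorial := by
    push_cast [show j'+3 = (j'+2)+1 from rfl, Nat.factorial_succ]; ring
  have f2 : ((r+3).factorial : ℝ) = (r+3)*(r+2)*(r+1)*r.factorial := by
    push_cast [show r+3 = (r+2)+1 from rfl, Nat.factorial_succ]; ring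
  have f3 : ((j'+r+6).factorial : ℝ)
      = (j'+r+6)*(j'+r+5)*(j'+r+4)*(j'+r+3)*(j'+r+2)*(j'+r+1)*(j'+r).factorial := by
    push_cast [show j'+r+6 = (j'+r+5)+1 from rfl, Nat.factorial_succ]; ring
  have hne : (j'.factorial : ℝ) * r.factorial ≠ 0 := by positivity
  apply mul_right_cancel₀ hne
  rw [f1, f2, f3] at e1
  rw [← e2] at e1
  linear_combination e1

set_option maxHeartbeats 1600000 in
theorem stmt_4 (γ : ℝ) (hγ : γ ∈ Set.Ioc (0:ℝ) 1) :
    ∃ C > 0, ∀ m j : ℕ, 6 ≤ m → 3 ≤ j → j ≤ m / 2 →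
      (m.choose j : ℝ) * ((Nat.factorial (j - 3) : ℝ) ^ (1/γ)) *
        ((Nat.factorial (m - j - 3) : ℝ) ^ (1/γ)) /
      ((Nat.factorial (m - 3) : ℝ) ^ (1/γ))
      ≤ C * (j : ℝ) ^ (-1 - 2/γ) := by
  obtain ⟨hγ0, hγ1⟩ := hγ
  set q : ℝ := 1/γ with hqdef
  have hq1 : 1 ≤ q := by rw [hqdef]; rw [le_div_iff₀ hγ0]; linarith
  have hq0 : 0 ≤ q - 1 := by linarith
  refine ⟨648 * (9:ℝ) ^ (q-1), by positivity, ?_⟩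
  intro m j hm hj hj2
  obtain ⟨j', rfl⟩ : ∃ j'', j = j'' + 3 := ⟨j - 3, by omega⟩
  have hjm : 2*(j'+3) ≤ m := by omega
  obtain ⟨r, rfl⟩ : ∃ r, m = j' + r + 6 := ⟨m - j' - 6, by omega⟩
  have hjr : j' ≤ r := by omega
  rw [show j'+3-3 = j' by omega, show j'+r+6-(j'+3)-3 = r by omega,
      show j'+r+6-3 = j'+r+3 by omega]
  -- abbreviations
  set C1 : ℝ := ((j'+r+6).choose (j'+3) : ℝ) with hC1
  set K : ℝ := ((j'+r).choose j' : ℝ) with hK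
  set P : ℝ := ((j'+r+3) : ℝ)*(j'+r+2)*(j'+r+1) with hP
  have hK1 : (1:ℝ) ≤ K := by
    rw [hK]; exact_mod_cast Nat.choose_pos (show j' ≤ j'+r by omega)
  have hK0 : (0:ℝ) < K := by linarith
  have hP1 : (1:ℝ) ≤ P := by
    rw [hP]
    have ha : (0:ℝ) ≤ (j':ℝ) + (r:ℝ) := by positivity
    nlinarith [ha, mul_nonneg ha ha, mul_nonneg (mul_nonneg ha ha) ha]
  have hP0 : (0:ℝ) < P := by linarith
  -- factorial quotient
  have hD : ((j'+r+3).factorial : ℝ) = P * K * (j'.factorial * r.factorial) := by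
    have e2 : ((j'+r).choose j' : ℝ) * j'.factorial * r.factorial = (j'+r).factorial := by
      have := Nat.choose_mul_factorial_mul_factorial (show j' ≤ j'+r by omega)
      rw [show j'+r - j' = r by omega] at this
      exact_mod_cast this
    have f : ((j'+r+3).factorial : ℝ)
        = (j'+r+3)*(j'+r+2)*(j'+r+1)*(j'+r).factorial := by
      push_cast [show j'+r+3 = (j'+r+2)+1 from rfl, Nat.factorial_succ]; ring
    rw [f, ← e2, hP, hK]; push_cast; ring
  have hA0 : (0:ℝ) < (j'.factorial : ℝ) := by exact_mod_cast j'.factorial_pos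
  have hB0 : (0:ℝ) < (r.factorial : ℝ) := by exact_mod_cast r.factorial_pos
  -- LHS = C1 / (P*K)^q
  have hLHS : C1 * ((j'.factorial : ℝ) ^ q) * ((r.factorial : ℝ) ^ q)
      / (((j'+r+3).factorial : ℝ) ^ q)
      = C1 / (P*K)^q := by
    rw [mul_assoc, ← Real.mul_rpow hA0.le hB0.le, mul_div_assoc,
        ← Real.div_rpow (by positivity) (by positivity : (0:ℝ) ≤ ((j'+r+3).factorial : ℝ)),
        hD]
    rw [show (j'.factorial : ℝ) * r.factorial / (P * K * (j'.factorial * r.factorial))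
        = 1/(P*K) by field_simp]
    rw [Real.div_rpow (by norm_num) (by positivity), Real.one_rpow, mul_one_div]
  rw [hLHS]
  -- x and exponent rewrite
  set x : ℝ := ((j':ℝ) + 3) with hx
  have hx3 : (3:ℝ) ≤ x := by rw [hx]; nlinarith [Nat.cast_nonneg (α := ℝ) j']
  have hx0 : (0:ℝ) < x := by linarith
  have hcast : ((j'+3 : ℕ) : ℝ) = x := by rw [hx]; push_cast; ring
  rw [hcast, show (-1 - 2/γ) = -(1+2*q) by rw [hqdef]; ring,
      Real.rpow_neg hx0.le, mul_comm (648 * (9:ℝ)^(q-1)), ← div_eq_inv_mul]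
  rw [div_le_div_iff₀ (by positivity) (by positivity)]
  -- main inequality: C1 * x^(1+2q) ≤ 648*9^(q-1) * (P*K)^q
  have hx2K : x^(2:ℕ) ≤ 9 * K := by
    have h1 : (j'+3)^2 ≤ 9 * ((j'+r).choose j') := by
      calc (j'+3)^2 ≤ 9 * 2^j' := aux_sq j'
      _ ≤ 9 * ((2*j').choose j') := by
          have := aux_central j'; omega
      _ ≤ 9 * ((j'+r).choose j') := by
          have := Nat.choose_le_choose j' (show 2*j' ≤ j'+r by omega); omega
    rw [hx, hK]; exact_mod_cast h1
  have h648 : C1 * x^(3:ℕ) ≤ 648 * (P * K) := by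
    have hM : ((j'+r+6)*(j'+r+5)*(j'+r+4) : ℝ) * x^(3:ℕ)
        ≤ 648 * (((j':ℝ)+3)*((j':ℝ)+2)*((j':ℝ)+1)) * (((r:ℝ)+3)*((r:ℝ)+2)*((r:ℝ)+1)) := by
      have hr : (j':ℝ) ≤ r := by exact_mod_cast hjr
      have hj'0 : (0:ℝ) ≤ (j':ℝ) := Nat.cast_nonneg j'
      have hr0 : (0:ℝ) ≤ (r:ℝ) := Nat.cast_nonneg r
      have hA : x^(3:ℕ) ≤ 27 * (((j':ℝ)+3)*((j':ℝ)+2)*((j':ℝ)+1)) := by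
        rw [hx]; nlinarith [sq_nonneg ((j':ℝ))]
      have hB : ((j'+r+6)*(j'+r+5)*(j'+r+4) : ℝ)
          ≤ 24 * (((r:ℝ)+3)*((r:ℝ)+2)*((r:ℝ)+1)) := by
        push_cast; nlinarith [mul_nonneg hr0 hr0, mul_nonneg (mul_nonneg hr0 hr0) hr0, sq_nonneg ((r:ℝ) - j')]
      calc ((j'+r+6)*(j'+r+5)*(j'+r+4) : ℝ) * x^(3:ℕ)
          ≤ (24 * (((r:ℝ)+3)*((r:ℝ)+2)*((r:ℝ)+1))) * (27 * (((j':ℝ)+3)*((j':ℝ)+2)*((j':ℝ)+1))) := by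
            apply mul_le_mul hB hA (by positivity) (by positivity)
      _ = 648 * (((j':ℝ)+3)*((j':ℝ)+2)*((j':ℝ)+1)) * (((r:ℝ)+3)*((r:ℝ)+2)*((r:ℝ)+1)) := by ring
    have hstar := aux_star j' r
    have hPi0 : (0:ℝ) < (((j':ℝ)+3)*((j':ℝ)+2)*((j':ℝ)+1)) * (((r:ℝ)+3)*((r:ℝ)+2)*((r:ℝ)+1)) := by positivity
    have key : C1 * x^(3:ℕ) * ((((j':ℝ)+3)*((j':ℝ)+2)*((j':ℝ)+1)) * (((r:ℝ)+3)*((r:ℝ)+2)*((r:ℝ)+1)))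
        ≤ 648 * (P * K) * ((((j':ℝ)+3)*((j':ℝ)+2)*((j':ℝ)+1)) * (((r:ℝ)+3)*((r:ℝ)+2)*((r:ℝ)+1))) := by
      have hstar' : C1 * (((j':ℝ)+3)*((j':ℝ)+2)*((j':ℝ)+1)) * (((r:ℝ)+3)*((r:ℝ)+2)*((r:ℝ)+1))
          = (((j':ℝ)+r+6)*((j':ℝ)+r+5)*((j':ℝ)+r+4)) * P * K := by
        rw [hC1, hK, hP]; push_cast; push_cast at hstar; linear_combination hstar
      calc C1 * x^(3:ℕ) * ((((j':ℝ)+3)*((j':ℝ)+2)*((j':ℝ)+1)) * (((r:ℝ)+3)*((r:ℝ)+2)*((r:ℝ)+1)))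
          = (C1 * (((j':ℝ)+3)*((j':ℝ)+2)*((j':ℝ)+1)) * (((r:ℝ)+3)*((r:ℝ)+2)*((r:ℝ)+1))) * x^(3:ℕ) := by ring
      _ = (((j':ℝ)+r+6)*((j':ℝ)+r+5)*((j':ℝ)+r+4)) * P * K * x^(3:ℕ) := by rw [hstar']
      _ = (P*K) * ((((j':ℝ)+r+6)*((j':ℝ)+r+5)*((j':ℝ)+r+4)) * x^(3:ℕ)) := by ring
      _ ≤ (P*K) * (648 * (((j':ℝ)+3)*((j':ℝ)+2)*((j':ℝ)+1)) * (((r:ℝ)+3)*((r:ℝ)+2)*((r:ℝ)+1))) := by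
            apply mul_le_mul_of_nonneg_left _ (by positivity)
            convert hM using 2 <;> push_cast <;> ring
      _ = 648 * (P * K) * ((((j':ℝ)+3)*((j':ℝ)+2)*((j':ℝ)+1)) * (((r:ℝ)+3)*((r:ℝ)+2)*((r:ℝ)+1))) := by ring
    exact le_of_mul_le_mul_right key hPi0
  -- now the rpow chain
  have hC10 : (0:ℝ) ≤ C1 := by rw [hC1]; positivity
  calc C1 * x^(1+2*q)
      = C1 * (x^(3:ℕ) * (x^(2:ℕ))^(q-1)) := by
        rw [← Real.rpow_natCast x 3, ← Real.rpow_natCast x 2,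
            ← Real.rpow_mul hx0.le, ← Real.rpow_add hx0]
        congr 2; push_cast; ring
  _ = (C1 * x^(3:ℕ)) * (x^(2:ℕ))^(q-1) := by ring
  _ ≤ (648 * (P*K)) * (9*K)^(q-1) := by
        apply mul_le_mul h648 (Real.rpow_le_rpow (by positivity) hx2K hq0)
          (by positivity) (by positivity)
  _ = 648 * (9:ℝ)^(q-1) * ((P*K) * K^(q-1)) := by
        rw [Real.mul_rpow (by norm_num) hK0.le]; ring
  _ ≤ 648 * (9:ℝ)^(q-1) * ((P*K) * (P*K)^(q-1)) := by
        apply mul_le_mul_of_nonneg_left _ (by positivity)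
        apply mul_le_mul_of_nonneg_left _ (by positivity)
        exact Real.rpow_le_rpow hK0.le (by nlinarith) hq0
  _ = 648 * (9:ℝ)^(q-1) * (P*K)^q := by
        rw [show (P*K) * (P*K)^(q-1) = (P*K)^(1:ℝ) * (P*K)^(q-1) by rw [Real.rpow_one],
            ← Real.rpow_add (by positivity)]
        congr 2; ring
end

section
/- Let $\gamma\in(0,1]$. There exists a constant $C>0$ such that for all integers $m\ge 5$ and all $j$ with $\lfloor m/2\rfloor+1\le j\le m-2$, $$\frac{\binom{m}{j}\,((m-j-1)!)^{1/(2\gamma)}\,((m-j)!)^{1/(2\gamma)}\,((j-3)!)^{1/\gamma}}{((m-3)!)^{1/\gamma}\,\sqrt{m-3}} \le \frac{C}{m-j}.$$ -/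
private lemma stmt_5_aux (i d : ℕ) (hdi : d ≤ i) :
    ((i:ℝ)+(d:ℝ)+5) * (((i:ℝ)+(d:ℝ)+4) * ((i:ℝ)+(d:ℝ)+3))
      ≤ 20 * (((i:ℝ)+3) * (((i:ℝ)+2) * ((i:ℝ)+1))) := by
  have hdi' : (d:ℝ) ≤ (i:ℝ) := by exact_mod_cast hdi
  have hi0 : (0:ℝ) ≤ (i:ℝ) := Nat.cast_nonneg i
  have hd0 : (0:ℝ) ≤ (d:ℝ) := Nat.cast_nonneg d
  nlinarith [mul_nonneg (mul_nonneg hi0 hi0) hi0, mul_nonneg hi0 hd0,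
    mul_nonneg (sub_nonneg.mpr hdi') (mul_nonneg hi0 hi0),
    mul_nonneg (sub_nonneg.mpr hdi') hi0,
    mul_nonneg (sub_nonneg.mpr hdi') hd0,
    mul_nonneg (mul_nonneg hd0 hd0) hd0]

theorem stmt_5 (γ : ℝ) (hγ : γ ∈ Set.Ioc (0:ℝ) 1) :
    ∃ C > 0, ∀ m j : ℕ, 5 ≤ m → m / 2 + 1 ≤ j → j ≤ m - 2 →
      (m.choose j : ℝ) * ((Nat.factorial (m - j - 1) : ℝ) ^ (1/(2*γ))) *
        ((Nat.factorial (m - j) : ℝ) ^ (1/(2*γ))) *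
        ((Nat.factorial (j - 3) : ℝ) ^ (1/γ)) /
      (((Nat.factorial (m - 3) : ℝ) ^ (1/γ)) * Real.sqrt ((m:ℝ) - 3))
      ≤ C / ((m : ℝ) - j) := by
  obtain ⟨hγ0, hγ1⟩ := hγ
  have hγne : γ ≠ 0 := ne_of_gt hγ0
  refine ⟨20, by norm_num, ?_⟩
  intro m j hm hj1 hj2
  obtain ⟨i, rfl⟩ : ∃ i, j = i + 3 := ⟨j - 3, by omega⟩
  obtain ⟨d, rfl⟩ : ∃ d, m = i + d + 5 := ⟨m - i - 5, by omega⟩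
  have hdi : d ≤ i := by omega
  have e1 : i + d + 5 - (i + 3) - 1 = d + 1 := by omega
  have e2 : i + d + 5 - (i + 3) = d + 2 := by omega
  have e3 : i + 3 - 3 = i := by omega
  have e4 : i + d + 5 - 3 = i + d + 2 := by omega
  rw [e1, e2, e3, e4]
  have hsub : ((i + d + 5 : ℕ) : ℝ) - 3 = ((i:ℝ) + (d:ℝ) + 2) := by push_cast; ring
  have hsub2 : ((i + d + 5 : ℕ) : ℝ) - ((i + 3 : ℕ) : ℝ) = (d:ℝ) + 2 := by push_cast; ring
  rw [hsub, hsub2]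
  set a := 1 / (2*γ) with hadef
  have hb : 1 / γ = 2 * a := by rw [hadef]; field_simp
  rw [hb]
  set A : ℝ := ((d+1).factorial : ℝ) with hAdef
  set B : ℝ := ((d+2).factorial : ℝ) with hBdef
  set Fi : ℝ := ((i).factorial : ℝ) with hFidef
  set Fm : ℝ := ((i+d+2).factorial : ℝ) with hFmdef
  set Ch : ℝ := ((i+d+5).choose (i+3) : ℝ) with hChdef
  set S : ℝ := Real.sqrt ((i:ℝ) + (d:ℝ) + 2) with hSdef
  have hA0 : 0 < A := by rw [hAdef]; exact_mod_cast (d+1).factorial_pos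
  have hB0 : 0 < B := by rw [hBdef]; exact_mod_cast (d+2).factorial_pos
  have hFi0 : 0 < Fi := by rw [hFidef]; exact_mod_cast i.factorial_pos
  have hFm0 : 0 < Fm := by rw [hFmdef]; exact_mod_cast (i+d+2).factorial_pos
  have hCh0 : 0 < Ch := by
    rw [hChdef]
    exact_mod_cast Nat.choose_pos (show i+3 ≤ i+d+5 by omega)
  have hS0 : 0 < S := by rw [hSdef]; positivity
  have ha0 : 0 < a := by rw [hadef]; positivity
  have ha12 : (1/2 : ℝ) ≤ a := by
    rw [hadef, div_le_div_iff₀ (by norm_num) (by positivity)]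
    linarith
  have h1b : (1:ℝ) ≤ 2 * a := by linarith
  have hd2 : (0:ℝ) < (d:ℝ) + 2 := by positivity
  have hBA : B = ((d:ℝ)+2) * A := by
    rw [hAdef, hBdef, Nat.factorial_succ]; push_cast; ring
  -- step 1: rewrite LHS
  have eAB : A ^ a * B ^ a = B ^ (2*a) / ((d:ℝ)+2) ^ a := by
    rw [eq_div_iff (by positivity : ((d:ℝ)+2)^a ≠ 0)]
    rw [show (2:ℝ)*a = a + a by ring, Real.rpow_add hB0]
    rw [mul_right_comm, ← Real.mul_rpow hA0.le hd2.le,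
      show A * ((d:ℝ)+2) = B by rw [hBA]; ring]
  have eBF : B ^ (2*a) * Fi ^ (2*a) / Fm ^ (2*a) = (B * Fi / Fm) ^ (2*a) := by
    rw [← Real.mul_rpow hB0.le hFi0.le, ← Real.div_rpow (by positivity) hFm0.le]
  have eLHS : Ch * A ^ a * B ^ a * Fi ^ (2*a) / (Fm ^ (2*a) * S)
      = Ch * (B * Fi / Fm) ^ (2*a) / (((d:ℝ)+2) ^ a * S) := by
    rw [← eBF, mul_assoc Ch, eAB]
    have h1 : ((d:ℝ)+2)^a ≠ 0 := by positivity
    have h2 : Fm ^ (2*a) ≠ 0 := by positivity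
    have h3 : S ≠ 0 := ne_of_gt hS0
    field_simp
  -- numeric facts
  have hnatdvd : (d+2).factorial * i.factorial ≤ (i+d+2).factorial := by
    have h := Nat.factorial_mul_factorial_dvd_factorial_add (d+2) i
    rw [show d+2+i = i+d+2 by omega] at h
    exact Nat.le_of_dvd (i+d+2).factorial_pos h
  have hBFi : B * Fi ≤ Fm := by
    rw [hBdef, hFidef, hFmdef]; exact_mod_cast hnatdvd
  have hr0 : 0 < B * Fi / Fm := by positivity
  have hr1 : B * Fi / Fm ≤ 1 := (div_le_one hFm0).mpr hBFi
  have hrpow : (B * Fi / Fm) ^ (2*a) ≤ B * Fi / Fm := by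
    nth_rewrite 2 [← Real.rpow_one (B * Fi / Fm)]
    exact Real.rpow_le_rpow_of_exponent_ge hr0 hr1 h1b
  have hd2a : Real.sqrt ((d:ℝ)+2) ≤ ((d:ℝ)+2) ^ a := by
    rw [show Real.sqrt ((d:ℝ)+2) = ((d:ℝ)+2) ^ (1/2 : ℝ) from Real.sqrt_eq_rpow _]
    exact Real.rpow_le_rpow_of_exponent_le (by push_cast; linarith [Nat.cast_nonneg (α := ℝ) d]) ha12
  have hsqS : Real.sqrt ((d:ℝ)+2) ≤ S := by
    rw [hSdef]
    apply Real.sqrt_le_sqrt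
    have : (0:ℝ) ≤ (i:ℝ) := Nat.cast_nonneg i
    linarith
  -- main combinatorial bound: Ch * B * Fi ≤ 20 * Fm
  have hcf : ((i+d+5).choose (i+3)) * (i+3).factorial * (d+2).factorial
      = (i+d+5).factorial := by
    have h := Nat.choose_mul_factorial_mul_factorial (show i+3 ≤ i+d+5 by omega)
    rwa [e2] at h
  have hf5 : ((i+d+5).factorial : ℝ)
      = ((i:ℝ)+(d:ℝ)+5) * (((i:ℝ)+(d:ℝ)+4) * (((i:ℝ)+(d:ℝ)+3) * Fm)) := by
    rw [hFmdef, show i+d+5 = (i+d+4)+1 from rfl, show i+d+4 = (i+d+3)+1 from rfl,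
      show i+d+3 = (i+d+2)+1 from rfl, Nat.factorial_succ, Nat.factorial_succ,
      Nat.factorial_succ]
    push_cast; ring
  have hfj : ((i+3).factorial : ℝ) = ((i:ℝ)+3) * (((i:ℝ)+2) * (((i:ℝ)+1) * Fi)) := by
    rw [hFidef, show i+3 = (i+2)+1 from rfl, show i+2 = (i+1)+1 from rfl,
      Nat.factorial_succ, Nat.factorial_succ, Nat.factorial_succ]
    push_cast; ring
  have hcfR : Ch * (((i:ℝ)+3) * (((i:ℝ)+2) * (((i:ℝ)+1) * Fi))) * B
      = ((i:ℝ)+(d:ℝ)+5) * (((i:ℝ)+(d:ℝ)+4) * (((i:ℝ)+(d:ℝ)+3) * Fm)) := by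
    rw [← hfj, ← hf5, hChdef, hBdef]
    exact_mod_cast congrArg (Nat.cast : ℕ → ℝ) hcf
  have hpoly := stmt_5_aux i d hdi
  have hmain : Ch * B * Fi ≤ 20 * Fm := by
    have hP : (0:ℝ) < ((i:ℝ)+3) * (((i:ℝ)+2) * ((i:ℝ)+1)) := by positivity
    apply le_of_mul_le_mul_right ?_ hP
    calc Ch * B * Fi * (((i:ℝ)+3) * (((i:ℝ)+2) * ((i:ℝ)+1)))
        = ((i:ℝ)+(d:ℝ)+5) * (((i:ℝ)+(d:ℝ)+4) * ((i:ℝ)+(d:ℝ)+3)) * Fm := by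
          rw [show Ch * B * Fi * (((i:ℝ)+3) * (((i:ℝ)+2) * (((i:ℝ)+1))))
            = Ch * (((i:ℝ)+3) * (((i:ℝ)+2) * (((i:ℝ)+1) * Fi))) * B by ring, hcfR]
          ring
      _ ≤ 20 * (((i:ℝ)+3) * (((i:ℝ)+2) * ((i:ℝ)+1))) * Fm :=
          mul_le_mul_of_nonneg_right hpoly hFm0.le
      _ = 20 * Fm * (((i:ℝ)+3) * (((i:ℝ)+2) * ((i:ℝ)+1))) := by ring
  -- assemble
  calc Ch * A ^ a * B ^ a * Fi ^ (2*a) / (Fm ^ (2*a) * S)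
      = Ch * (B * Fi / Fm) ^ (2*a) / (((d:ℝ)+2) ^ a * S) := eLHS
    _ ≤ Ch * (B * Fi / Fm) / (Real.sqrt ((d:ℝ)+2) * Real.sqrt ((d:ℝ)+2)) := by
        apply div_le_div₀ (by positivity) ?_ (by positivity) ?_
        · exact mul_le_mul_of_nonneg_left hrpow hCh0.le
        · exact mul_le_mul hd2a hsqS (Real.sqrt_nonneg _) (by positivity)
    _ = Ch * B * Fi / Fm / ((d:ℝ)+2) := by
        rw [Real.mul_self_sqrt hd2.le]; ring
    _ ≤ 20 / ((d:ℝ)+2) := by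
        gcongr
        rw [div_le_iff₀ hFm0]
        linarith [hmain]
end

section
/- Let $\gamma\in(0,1]$. There exists a constant $C>0$ such that for all integers $m\ge 5$ and all $j$ with $\lfloor m/2\rfloor+1\le j\le m-2$, $$\frac{\binom{m}{j}\,((m-j-2)!)^{1/\gamma}\,((j-3)!)^{1/\gamma}}{((m-3)!)^{1/\gamma}} \le \frac{C}{(m-j)^2}.$$ -/
lemma bin3 (a b : ℕ) :
    (a+b+5).choose (b+3) * ((b+3)*(b+2)*(b+1)) =
    (a+b+5)*(a+b+4)*(a+b+3) * (a+b+2).choose b := by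
  have h1 := (Nat.add_one_mul_choose_eq (a+b+2) b).symm
  have h2 := (Nat.add_one_mul_choose_eq (a+b+3) (b+1)).symm
  have h3 := (Nat.add_one_mul_choose_eq (a+b+4) (b+2)).symm
  calc (a+b+5).choose (b+3) * ((b+3)*(b+2)*(b+1))
      = ((a+b+4)+1).choose ((b+2)+1) * ((b+2)+1) * (b+2) * (b+1) := by ring_nf
    _ = ((a+b+4)+1) * (a+b+4).choose (b+2) * (b+2) * (b+1) := by rw [h3]
    _ = (a+b+5) * (((a+b+3)+1).choose ((b+1)+1) * ((b+1)+1)) * (b+1) := by ring_nf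
    _ = (a+b+5) * (((a+b+3)+1) * (a+b+3).choose (b+1)) * (b+1) := by rw [h2]
    _ = (a+b+5) * (a+b+4) * (((a+b+2)+1).choose (b+1) * (b+1)) := by ring_nf
    _ = (a+b+5) * (a+b+4) * (((a+b+2)+1) * (a+b+2).choose b) := by rw [h1]
    _ = (a+b+5)*(a+b+4)*(a+b+3) * (a+b+2).choose b := by ring

lemma choose_le (a b : ℕ) (hab : a ≤ b) :
    (a+b+5).choose (b+3) ≤ 12 * (a+b+2).choose b := by
  have h := bin3 a b
  have hpos : 0 < (b+3)*(b+2)*(b+1) := by positivity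
  have hC : 1 ≤ (a+b+2).choose b := Nat.choose_pos (by omega)
  have hm : (a+b+5)*(a+b+4)*(a+b+3) ≤ 12 * ((b+3)*(b+2)*(b+1)) := by
    calc (a+b+5)*(a+b+4)*(a+b+3) ≤ (2*(b+3))*(2*(b+2))*(3*(b+1)) :=
          Nat.mul_le_mul (Nat.mul_le_mul (by omega) (by omega)) (by omega)
      _ = 12 * ((b+3)*(b+2)*(b+1)) := by ring
  have : (a+b+5).choose (b+3) * ((b+3)*(b+2)*(b+1)) ≤
      12 * (a+b+2).choose b * ((b+3)*(b+2)*(b+1)) := by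
    rw [h, show 12 * (a+b+2).choose b * ((b+3)*(b+2)*(b+1))
      = 12 * ((b+3)*(b+2)*(b+1)) * (a+b+2).choose b by ring]
    exact Nat.mul_le_mul_right _ hm
  exact Nat.le_of_mul_le_mul_right this hpos

lemma key (a b : ℕ) (hab : a ≤ b) :
    (a+2)^2 * ((a+b+5).choose (b+3) * (Nat.factorial a * Nat.factorial b))
      ≤ 24 * Nat.factorial (a+b+2) := by
  have hfac : (a+b+2).choose b * Nat.factorial b * Nat.factorial (a+2)
      = Nat.factorial (a+b+2) := by
    have := Nat.choose_mul_factorial_mul_factorial (show b ≤ a+b+2 by omega)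
    simpa [show a+b+2-b = a+2 by omega] using this
  have hf2 : Nat.factorial (a+2) = (a+2)*(a+1)*Nat.factorial a := by
    rw [Nat.factorial_succ, Nat.factorial_succ]; ring
  have hC := choose_le a b hab
  calc (a+2)^2 * ((a+b+5).choose (b+3) * (Nat.factorial a * Nat.factorial b))
      ≤ (a+2)^2 * (12 * (a+b+2).choose b * (Nat.factorial a * Nat.factorial b)) := by
        exact Nat.mul_le_mul_left _ (Nat.mul_le_mul_right _ hC)
    _ = ((a+2)^2*12) * ((a+b+2).choose b * Nat.factorial a * Nat.factorial b) := by ring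
    _ ≤ (24*((a+2)*(a+1))) * ((a+b+2).choose b * Nat.factorial a * Nat.factorial b) :=
        Nat.mul_le_mul_right _ (by nlinarith)
    _ = 24 * ((a+b+2).choose b * Nat.factorial b * ((a+2)*(a+1)*Nat.factorial a)) := by ring
    _ = 24 * Nat.factorial (a+b+2) := by rw [← hfac, hf2]

theorem stmt_6 (γ : ℝ) (hγ : γ ∈ Set.Ioc (0:ℝ) 1) :
    ∃ C > 0, ∀ m j : ℕ, 5 ≤ m → m / 2 + 1 ≤ j → j ≤ m - 2 →
      (m.choose j : ℝ) * ((Nat.factorial (m - j - 2) : ℝ) ^ (1/γ)) *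
        ((Nat.factorial (j - 3) : ℝ) ^ (1/γ)) /
      ((Nat.factorial (m - 3) : ℝ) ^ (1/γ))
      ≤ C / ((m : ℝ) - j)^2 := by
  obtain ⟨hγ0, hγ1⟩ := hγ
  refine ⟨24, by norm_num, fun m j hm hj1 hj2 => ?_⟩
  set a := m - j - 2 with ha
  set b := j - 3 with hb
  have hab : a ≤ b := by omega
  have hmj : m - j = a + 2 := by omega
  have hm3 : m - 3 = a + b + 2 := by omega
  have hmeq : m = a + b + 5 := by omega
  have hjeq : j = b + 3 := by omega
  have hp1 : 1 ≤ 1/γ := by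
    rw [le_div_iff₀ hγ0]; linarith
  set A : ℝ := (Nat.factorial a : ℝ) with hA
  set B : ℝ := (Nat.factorial b : ℝ) with hB
  set D : ℝ := (Nat.factorial (a+b+2) : ℝ) with hD
  have hA0 : 0 < A := by positivity
  have hB0 : 0 < B := by positivity
  have hD0 : 0 < D := by positivity
  have hxle : A * B ≤ D := by
    have h1 : Nat.factorial a * Nat.factorial b ≤ Nat.factorial (a+b) :=
      Nat.le_of_dvd (Nat.factorial_pos _) (Nat.factorial_mul_factorial_dvd_factorial_add a b)
    have h2 : Nat.factorial (a+b) ≤ Nat.factorial (a+b+2) :=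
      Nat.factorial_le (by omega)
    rw [hA, hB, hD]
    exact_mod_cast le_trans h1 h2
  set x : ℝ := A * B / D with hx
  have hx0 : 0 < x := by positivity
  have hx1 : x ≤ 1 := by rw [hx, div_le_one hD0]; exact hxle
  have hrw : A ^ (1/γ) * B ^ (1/γ) / D ^ (1/γ) = x ^ (1/γ) := by
    rw [hx, Real.div_rpow (by positivity) hD0.le, Real.mul_rpow hA0.le hB0.le]
  have hxp : x ^ (1/γ) ≤ x := by
    calc x ^ (1/γ) ≤ x ^ (1:ℝ) := Real.rpow_le_rpow_of_exponent_ge hx0 hx1 hp1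
      _ = x := Real.rpow_one x
  have hkey : ((a:ℝ)+2)^2 * ((m.choose j : ℝ) * (A * B)) ≤ 24 * D := by
    have h := key a b hab
    have hc : m.choose j = (a+b+5).choose (b+3) := by rw [hmeq, hjeq]
    rw [hA, hB, hD, hc]
    exact_mod_cast h
  have hmjr : (m : ℝ) - j = (a : ℝ) + 2 := by
    rw [hmeq, hjeq]; push_cast; ring
  have hch0 : (0:ℝ) ≤ (m.choose j : ℝ) := by positivity
  rw [hm3]
  show (m.choose j : ℝ) * A ^ (1/γ) * B ^ (1/γ) / D ^ (1/γ) ≤ 24 / ((m:ℝ) - (j:ℝ))^2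
  calc (m.choose j : ℝ) * A ^ (1/γ) * B ^ (1/γ) / D ^ (1/γ)
      = (m.choose j : ℝ) * (A ^ (1/γ) * B ^ (1/γ) / D ^ (1/γ)) := by ring
    _ = (m.choose j : ℝ) * x ^ (1/γ) := by rw [hrw]
    _ ≤ (m.choose j : ℝ) * x := mul_le_mul_of_nonneg_left hxp hch0
    _ ≤ 24 / ((m : ℝ) - j)^2 := by
        rw [hmjr, hx, mul_div_assoc']
        rw [div_le_div_iff₀ hD0 (by positivity)]
        calc (m.choose j : ℝ) * (A * B) * ((a:ℝ)+2)^2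
            = ((a:ℝ)+2)^2 * ((m.choose j : ℝ) * (A * B)) := by ring
          _ ≤ 24 * D := hkey
end

section
/- Let $\gamma\in(0,1]$ and define $a_{m,j}=j^{-2}$ for $3\le j\le\lfloor m/2\rfloor$ and $a_{m,j}=(m-j)^{-2}$ for $\lfloor m/2\rfloor\le j\le m-3$. There exists a constant $C>0$ such that for all integers $m\ge 6$ and all $j$ with $3\le j\le m-3$, $$\frac{\binom{m}{j}\,((m-j-2)!)^{1/\gamma}\,((j-3)!)^{1/\gamma}}{((m-3)!)^{1/\gamma}\,\sqrt{m-3}\,\sqrt{m-j-2}}\le C\,a_{m,j}.$$ -/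
set_option maxHeartbeats 1000000 in
theorem stmt_7 (γ : ℝ) (hγ : γ ∈ Set.Ioc (0:ℝ) 1) :
    ∃ C > 0, ∀ m j : ℕ, 6 ≤ m → 3 ≤ j → j ≤ m - 3 →
      (m.choose j : ℝ) * ((Nat.factorial (m - j - 2) : ℝ) ^ (1/γ)) *
        ((Nat.factorial (j - 3) : ℝ) ^ (1/γ)) /
      (((Nat.factorial (m - 3) : ℝ) ^ (1/γ)) * Real.sqrt ((m:ℝ) - 3) *
        Real.sqrt ((m:ℝ) - j - 2))
      ≤ C * (if j ≤ m / 2 then 1/(j:ℝ)^2 else 1/((m:ℝ) - j)^2) := by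
  obtain ⟨hγ0, hγ1⟩ := hγ
  have hz1 : (1:ℝ) ≤ 1/γ := by rw [le_div_iff₀ hγ0]; linarith
  refine ⟨100, by norm_num, ?_⟩
  intro m j hm hj hjm
  obtain ⟨a, b, rfl, rfl⟩ : ∃ a b, j = a + 3 ∧ m = a + b + 6 :=
    ⟨j - 3, m - j - 3, by omega, by omega⟩
  have e1 : a + b + 6 - (a + 3) - 2 = b + 1 := by omega
  have e2 : a + 3 - 3 = a := by omega
  have e3 : a + b + 6 - 3 = a + b + 3 := by omega
  rw [e1, e2, e3]
  have e4 : ((a + b + 6 : ℕ) : ℝ) - 3 = (a:ℝ) + (b:ℝ) + 3 := by push_cast; ring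
  have e5 : ((a + b + 6 : ℕ) : ℝ) - ((a + 3 : ℕ):ℝ) - 2 = (b:ℝ) + 1 := by push_cast; ring
  rw [e4, e5]
  have hA : (0:ℝ) ≤ (a:ℝ) := Nat.cast_nonneg a
  have hB : (0:ℝ) ≤ (b:ℝ) := Nat.cast_nonneg b
  have hfa : (0:ℝ) < (Nat.factorial a : ℝ) := by exact_mod_cast Nat.factorial_pos a
  have hfb : (0:ℝ) < (Nat.factorial (b+1) : ℝ) := by exact_mod_cast Nat.factorial_pos (b+1)
  have hfd : (0:ℝ) < (Nat.factorial (a+b+3) : ℝ) := by exact_mod_cast Nat.factorial_pos (a+b+3)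
  have hfa3 : ((Nat.factorial (a+3) : ℝ)) = ((a:ℝ)+3)*((a:ℝ)+2)*((a:ℝ)+1)*(Nat.factorial a : ℝ) := by
    have h : Nat.factorial (a+3) = (a+3)*((a+2)*((a+1)*Nat.factorial a)) := rfl
    rw [h]; push_cast; ring
  have hfb3 : ((Nat.factorial (b+3) : ℝ)) = ((b:ℝ)+3)*((b:ℝ)+2)*(Nat.factorial (b+1) : ℝ) := by
    have h : Nat.factorial (b+3) = (b+3)*((b+2)*Nat.factorial (b+1)) := rfl
    rw [h]; push_cast; ring
  have hfab : ((Nat.factorial (a+b+6) : ℝ)) =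
      ((a:ℝ)+(b:ℝ)+6)*((a:ℝ)+(b:ℝ)+5)*((a:ℝ)+(b:ℝ)+4)*(Nat.factorial (a+b+3) : ℝ) := by
    have h : Nat.factorial (a+b+6) = (a+b+6)*((a+b+5)*((a+b+4)*Nat.factorial (a+b+3))) := rfl
    rw [h]; push_cast; ring
  have hval : (((a+b+6).choose (a+3) : ℝ)) *
      ((Nat.factorial (b+1):ℝ) * (Nat.factorial a : ℝ) / (Nat.factorial (a+b+3):ℝ)) =
      (((a:ℝ)+(b:ℝ)+6)*(((a:ℝ)+(b:ℝ)+5)*((a:ℝ)+(b:ℝ)+4))) /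
      (((a:ℝ)+3)*(((a:ℝ)+2)*(((a:ℝ)+1)*(((b:ℝ)+3)*((b:ℝ)+2))))) := by
    rw [Nat.cast_choose ℝ (by omega : a+3 ≤ a+b+6), show a+b+6-(a+3) = b+3 from by omega,
      hfa3, hfb3, hfab]
    field_simp
  have hx0 : (0:ℝ) < (Nat.factorial (b+1):ℝ) * (Nat.factorial a : ℝ) / (Nat.factorial (a+b+3):ℝ) := by
    positivity
  have hx1 : (Nat.factorial (b+1):ℝ) * (Nat.factorial a : ℝ) / (Nat.factorial (a+b+3):ℝ) ≤ 1 := by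
    rw [div_le_one hfd]
    exact_mod_cast Nat.le_of_dvd (Nat.factorial_pos _)
      (dvd_trans (Nat.factorial_mul_factorial_dvd_factorial_add (b+1) a)
        (Nat.factorial_dvd_factorial (by omega)))
  have hs1 : (0:ℝ) < Real.sqrt ((a:ℝ)+(b:ℝ)+3) := Real.sqrt_pos.mpr (by linarith)
  have hs2 : (0:ℝ) < Real.sqrt ((b:ℝ)+1) := Real.sqrt_pos.mpr (by linarith)
  have hDz : (0:ℝ) < (Nat.factorial (a+b+3):ℝ) ^ (1/γ) := Real.rpow_pos_of_pos hfd _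
  have hrp : (Nat.factorial (b+1):ℝ) ^ (1/γ) * (Nat.factorial a:ℝ) ^ (1/γ) ≤
      ((Nat.factorial (b+1):ℝ) * (Nat.factorial a : ℝ) / (Nat.factorial (a+b+3):ℝ)) *
        (Nat.factorial (a+b+3):ℝ) ^ (1/γ) := by
    rw [← Real.mul_rpow hfb.le hfa.le]
    calc ((Nat.factorial (b+1):ℝ) * (Nat.factorial a : ℝ)) ^ (1/γ)
        = (((Nat.factorial (b+1):ℝ) * (Nat.factorial a : ℝ) / (Nat.factorial (a+b+3):ℝ)) *
            (Nat.factorial (a+b+3):ℝ)) ^ (1/γ) := by rw [div_mul_cancel₀ _ hfd.ne']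
      _ = ((Nat.factorial (b+1):ℝ) * (Nat.factorial a : ℝ) / (Nat.factorial (a+b+3):ℝ)) ^ (1/γ) *
            (Nat.factorial (a+b+3):ℝ) ^ (1/γ) := Real.mul_rpow hx0.le hfd.le
      _ ≤ ((Nat.factorial (b+1):ℝ) * (Nat.factorial a : ℝ) / (Nat.factorial (a+b+3):ℝ)) ^ (1:ℝ) *
            (Nat.factorial (a+b+3):ℝ) ^ (1/γ) :=
          mul_le_mul_of_nonneg_right
            (Real.rpow_le_rpow_of_exponent_ge hx0 hx1 hz1) hDz.le
      _ = ((Nat.factorial (b+1):ℝ) * (Nat.factorial a : ℝ) / (Nat.factorial (a+b+3):ℝ)) *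
            (Nat.factorial (a+b+3):ℝ) ^ (1/γ) := by rw [Real.rpow_one]
  have hch : (0:ℝ) ≤ ((a+b+6).choose (a+3) : ℝ) := Nat.cast_nonneg _
  have key : ((a+b+6).choose (a+3) : ℝ) * (Nat.factorial (b+1):ℝ) ^ (1/γ) *
      (Nat.factorial a:ℝ) ^ (1/γ) /
      ((Nat.factorial (a+b+3):ℝ) ^ (1/γ) * Real.sqrt ((a:ℝ)+(b:ℝ)+3) * Real.sqrt ((b:ℝ)+1)) ≤
      (((a:ℝ)+(b:ℝ)+6)*(((a:ℝ)+(b:ℝ)+5)*((a:ℝ)+(b:ℝ)+4))) /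
      (((a:ℝ)+3)*(((a:ℝ)+2)*(((a:ℝ)+1)*(((b:ℝ)+3)*((b:ℝ)+2))))) /
      (Real.sqrt ((a:ℝ)+(b:ℝ)+3) * Real.sqrt ((b:ℝ)+1)) := by
    rw [← hval]
    calc ((a+b+6).choose (a+3) : ℝ) * (Nat.factorial (b+1):ℝ) ^ (1/γ) *
        (Nat.factorial a:ℝ) ^ (1/γ) /
        ((Nat.factorial (a+b+3):ℝ) ^ (1/γ) * Real.sqrt ((a:ℝ)+(b:ℝ)+3) * Real.sqrt ((b:ℝ)+1))
        = ((a+b+6).choose (a+3) : ℝ) *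
            ((Nat.factorial (b+1):ℝ) ^ (1/γ) * (Nat.factorial a:ℝ) ^ (1/γ)) /
            ((Nat.factorial (a+b+3):ℝ) ^ (1/γ) *
              (Real.sqrt ((a:ℝ)+(b:ℝ)+3) * Real.sqrt ((b:ℝ)+1))) := by ring
      _ ≤ ((a+b+6).choose (a+3) : ℝ) *
            (((Nat.factorial (b+1):ℝ) * (Nat.factorial a : ℝ) / (Nat.factorial (a+b+3):ℝ)) *
              (Nat.factorial (a+b+3):ℝ) ^ (1/γ)) /
            ((Nat.factorial (a+b+3):ℝ) ^ (1/γ) *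
              (Real.sqrt ((a:ℝ)+(b:ℝ)+3) * Real.sqrt ((b:ℝ)+1))) := by
          have hden : (0:ℝ) < (Nat.factorial (a+b+3):ℝ) ^ (1/γ) *
              (Real.sqrt ((a:ℝ)+(b:ℝ)+3) * Real.sqrt ((b:ℝ)+1)) :=
            mul_pos hDz (mul_pos hs1 hs2)
          exact div_le_div_of_nonneg_right
            (mul_le_mul_of_nonneg_left hrp hch) hden.le
      _ = ((a+b+6).choose (a+3) : ℝ) *
            ((Nat.factorial (b+1):ℝ) * (Nat.factorial a : ℝ) / (Nat.factorial (a+b+3):ℝ)) /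
            (Real.sqrt ((a:ℝ)+(b:ℝ)+3) * Real.sqrt ((b:ℝ)+1)) := by
          field_simp
  refine le_trans key ?_
  clear key hrp hval hfa3 hfb3 hfab hx0 hx1 hDz hch hfa hfb hfd e1 e2 e3 e4 e5 hz1 hγ0 hγ1 hm hj
  by_cases hab : a ≤ b
  · rw [if_pos (by omega : a + 3 ≤ (a+b+6)/2)]
    have e6 : ((a+3:ℕ):ℝ) = (a:ℝ)+3 := by push_cast; ring
    rw [e6]
    have hab' : (a:ℝ) ≤ (b:ℝ) := by exact_mod_cast hab
    clear hab hjm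
    have hs : ((a:ℝ)+(b:ℝ)+6)/4 ≤ Real.sqrt ((a:ℝ)+(b:ℝ)+3) * Real.sqrt ((b:ℝ)+1) := by
      rw [← Real.sqrt_mul (by linarith) ((b:ℝ)+1), Real.le_sqrt' (by positivity)]
      nlinarith [mul_nonneg hA hB, sq_nonneg ((a:ℝ)-(b:ℝ))]
    rw [show (100:ℝ) * (1/((a:ℝ)+3)^2) = 100/((a:ℝ)+3)^2 from by ring, div_div,
      div_le_div_iff₀ (by positivity) (by positivity)]
    have t1 : ((a:ℝ)+(b:ℝ)+5)*((a:ℝ)+(b:ℝ)+4) ≤ (2*((b:ℝ)+3))*(2*((b:ℝ)+2)) := by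
      nlinarith [mul_nonneg (sub_nonneg.2 hab') hA, mul_nonneg (sub_nonneg.2 hab') hB]
    have t2 : ((a:ℝ)+(b:ℝ)+5)*((a:ℝ)+(b:ℝ)+4)*((a:ℝ)+3) ≤
        (2*((b:ℝ)+3))*(2*((b:ℝ)+2))*(3*((a:ℝ)+1)) := by
      apply mul_le_mul t1 (by linarith) (by linarith) (by positivity)
    have t3 : (2*((b:ℝ)+3))*(2*((b:ℝ)+2))*(3*((a:ℝ)+1)) ≤
        25*(((a:ℝ)+2)*(((a:ℝ)+1)*(((b:ℝ)+3)*((b:ℝ)+2)))) := by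
      nlinarith [mul_nonneg (mul_nonneg (mul_nonneg (show (0:ℝ) ≤ 25*(a:ℝ)+38 by linarith)
        (show (0:ℝ) ≤ (a:ℝ)+1 by linarith)) (show (0:ℝ) ≤ (b:ℝ)+3 by linarith))
        (show (0:ℝ) ≤ (b:ℝ)+2 by linarith)]
    have hpoly : ((a:ℝ)+(b:ℝ)+6)*(((a:ℝ)+(b:ℝ)+5)*((a:ℝ)+(b:ℝ)+4)) * ((a:ℝ)+3)^2 ≤
        25*(((a:ℝ)+3)*(((a:ℝ)+2)*(((a:ℝ)+1)*(((b:ℝ)+3)*((b:ℝ)+2))))) * ((a:ℝ)+(b:ℝ)+6) := by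
      nlinarith [mul_le_mul_of_nonneg_left (t2.trans t3)
        (show (0:ℝ) ≤ ((a:ℝ)+3)*((a:ℝ)+(b:ℝ)+6) by positivity)]
    have hDp : (0:ℝ) < ((a:ℝ)+3)*(((a:ℝ)+2)*(((a:ℝ)+1)*(((b:ℝ)+3)*((b:ℝ)+2)))) := by positivity
    nlinarith [mul_le_mul_of_nonneg_left hs hDp.le, hpoly]
  · rw [if_neg (by omega : ¬ (a + 3 ≤ (a+b+6)/2))]
    have e7 : ((a+b+6:ℕ):ℝ) - ((a+3:ℕ):ℝ) = (b:ℝ)+3 := by push_cast; ring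
    rw [e7]
    have hab' : (b:ℝ) ≤ (a:ℝ) := by
      have h : b ≤ a := by omega
      exact_mod_cast h
    clear hab hjm
    have hs : (1:ℝ) ≤ Real.sqrt ((a:ℝ)+(b:ℝ)+3) * Real.sqrt ((b:ℝ)+1) := by
      have h1 : (1:ℝ) ≤ Real.sqrt ((a:ℝ)+(b:ℝ)+3) := by
        rw [Real.le_sqrt' one_pos]; nlinarith
      have h2 : (1:ℝ) ≤ Real.sqrt ((b:ℝ)+1) := by
        rw [Real.le_sqrt' one_pos]; nlinarith
      nlinarith
    rw [show (100:ℝ) * (1/((b:ℝ)+3)^2) = 100/((b:ℝ)+3)^2 from by ring, div_div,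
      div_le_div_iff₀ (by positivity) (by positivity)]
    have u1 : ((a:ℝ)+(b:ℝ)+6)*((a:ℝ)+(b:ℝ)+4) ≤ 4*(((a:ℝ)+3)*((a:ℝ)+2)) := by
      nlinarith [mul_nonneg (sub_nonneg.2 hab') hA, mul_nonneg (sub_nonneg.2 hab') hB]
    have u2 : ((a:ℝ)+(b:ℝ)+5)*((b:ℝ)+3) ≤ 9*(((a:ℝ)+1)*((b:ℝ)+2)) := by
      nlinarith [mul_nonneg (sub_nonneg.2 hab') hA, mul_nonneg (sub_nonneg.2 hab') hB]
    have u3 : (((a:ℝ)+(b:ℝ)+6)*((a:ℝ)+(b:ℝ)+4))*(((a:ℝ)+(b:ℝ)+5)*((b:ℝ)+3)) ≤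
        (4*(((a:ℝ)+3)*((a:ℝ)+2)))*(9*(((a:ℝ)+1)*((b:ℝ)+2))) := by
      apply mul_le_mul u1 u2 (by positivity) (by positivity)
    have hpoly : ((a:ℝ)+(b:ℝ)+6)*(((a:ℝ)+(b:ℝ)+5)*((a:ℝ)+(b:ℝ)+4)) * ((b:ℝ)+3)^2 ≤
        100*(((a:ℝ)+3)*(((a:ℝ)+2)*(((a:ℝ)+1)*(((b:ℝ)+3)*((b:ℝ)+2))))) := by
      nlinarith [mul_le_mul_of_nonneg_right u3 (show (0:ℝ) ≤ (b:ℝ)+3 by linarith),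
        mul_nonneg (mul_nonneg (mul_nonneg (mul_nonneg (show (0:ℝ) ≤ (a:ℝ)+3 by linarith)
          (show (0:ℝ) ≤ (a:ℝ)+2 by linarith)) (show (0:ℝ) ≤ (a:ℝ)+1 by linarith))
          (show (0:ℝ) ≤ (b:ℝ)+3 by linarith)) (show (0:ℝ) ≤ (b:ℝ)+2 by linarith)]
    have hDp : (0:ℝ) < ((a:ℝ)+3)*(((a:ℝ)+2)*(((a:ℝ)+1)*(((b:ℝ)+3)*((b:ℝ)+2)))) := by positivity
    nlinarith [mul_le_mul_of_nonneg_left hs hDp.le, hpoly]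
end

section
/- Let $E:[0,T^*)\to[0,\infty)$, $F, G:[0,T^*)\to[0,\infty)$ be continuous with $E$ differentiable, and suppose that for constants $C_0,\lambda,\varepsilon>0$ with $\lambda> 2C_0(1+E(0))$ one has for all $t$: $$E'(t)+\lambda F(t)+\tfrac12 G(t)\le C_0E(t)\big(1+E(t)+G(t)\big)+C_0(1+E(t))F(t)+C_0\frac{E(t)^3}{\varepsilon^2}.$$ If $E(0)\le \varepsilon^2$ and $C_0\varepsilon^2\le \tfrac14$, then there exists $T>0$ depending only on $C_0$ and $\lambda$ (not on $\varepsilon$) such that $E(t)\le 4e^{2C_0 t}\varepsilon^2$ for all $t\in[0,\min(T,T^*))$. -/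
set_option maxHeartbeats 1000000 in
theorem stmt_15 (C₀ lam : ℝ) (hC : 0 < C₀) (hlam : 0 < lam) :
    ∃ T > 0, ∀ (Tstar : ℝ) (E F G : ℝ → ℝ) (ε : ℝ),
      0 < Tstar → 0 < ε →
      (∀ t ∈ Set.Ico (0:ℝ) Tstar, 0 ≤ E t) →
      (∀ t ∈ Set.Ico (0:ℝ) Tstar, 0 ≤ F t) →
      (∀ t ∈ Set.Ico (0:ℝ) Tstar, 0 ≤ G t) →
      ContinuousOn E (Set.Ico 0 Tstar) →
      ContinuousOn F (Set.Ico 0 Tstar) →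
      ContinuousOn G (Set.Ico 0 Tstar) →
      (∀ t ∈ Set.Ico (0:ℝ) Tstar, DifferentiableAt ℝ E t) →
      lam > 2 * C₀ * (1 + E 0) →
      (∀ t ∈ Set.Ico (0:ℝ) Tstar,
        deriv E t + lam * F t + (1/2) * G t
          ≤ C₀ * E t * (1 + E t + G t) + C₀ * (1 + E t) * F t + C₀ * (E t)^3 / ε^2) →
      E 0 ≤ ε^2 → C₀ * ε^2 ≤ 1/4 →
      ∀ t ∈ Set.Ico (0:ℝ) (min T Tstar), E t ≤ 4 * Real.exp (2*C₀*t) * ε^2 := by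
  set c : ℝ := C₀ + 3/2 with hc_def
  have hc : 0 < c := by positivity
  refine ⟨Real.log 2 / c, div_pos (Real.log_pos one_lt_two) hc, ?_⟩
  intro Tstar E F G ε hTstar hε hE0nn hF0nn hG0nn hEc hFc hGc hEd hlam2 hIneq hE0 hCε
  set m : ℝ := min (2 * ε ^ 2) (1 + 2 * E 0) with hm_def
  have hE00 : 0 ≤ E 0 := hE0nn 0 ⟨le_refl 0, hTstar⟩
  have hε2 : 0 < ε ^ 2 := by positivity
  have hm_pos : 0 < m := lt_min (by positivity) (by linarith)
  have hE0m : E 0 < m := lt_min (by nlinarith) (by linarith)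
  -- derivative bound on the bootstrap region
  have hderiv : ∀ x ∈ Set.Ico (0:ℝ) Tstar, E x ≤ m → deriv E x ≤ c * E x + 0 := by
    intro x hx hxm
    have h1 := hIneq x hx
    have hEnn := hE0nn x hx
    have hFnn := hF0nn x hx
    have hGnn := hG0nn x hx
    have hx2 : E x ≤ 2 * ε ^ 2 := le_trans hxm (min_le_left _ _)
    have hx1 : E x ≤ 1 + 2 * E 0 := le_trans hxm (min_le_right _ _)
    have hcube : C₀ * (E x) ^ 3 / ε ^ 2 ≤ E x := by
      rw [div_le_iff₀ hε2]
      nlinarith [sq_nonneg (E x), mul_nonneg hEnn hEnn, sq_nonneg ε,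
        mul_nonneg (mul_nonneg hC.le hEnn) hEnn]
    have hF : C₀ * (1 + E x) * F x ≤ lam * F x := by
      apply mul_le_mul_of_nonneg_right _ hFnn
      nlinarith
    have hG : C₀ * E x * G x ≤ (1/2) * G x := by
      apply mul_le_mul_of_nonneg_right _ hGnn
      nlinarith
    have hsq : C₀ * E x * E x ≤ (1/2) * E x := by
      nlinarith [mul_le_mul_of_nonneg_left hx2 (mul_nonneg hC.le hEnn),
        mul_le_mul_of_nonneg_right hCε hEnn]
    have hexpand : C₀ * E x * (1 + E x + G x)
        = C₀ * E x + C₀ * E x * E x + C₀ * E x * G x := by ring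
    rw [hexpand] at h1
    have : c * E x + 0 = C₀ * E x + (1/2) * E x + E x := by rw [hc_def]; ring
    rw [this]
    linarith
  -- right-slope condition
  have hslope : ∀ x ∈ Set.Ico (0:ℝ) Tstar, ∀ r, deriv E x < r →
      ∃ᶠ z in nhdsWithin x (Set.Ioi x), (z - x)⁻¹ * (E z - E x) < r := by
    intro x hx r hr
    exact ((hEd x hx).hasDerivAt.hasDerivWithinAt).liminf_right_slope_le hr
  -- Gronwall on [0, b] assuming the bootstrap bound on [0, b)
  have gron : ∀ b, 0 ≤ b → b < Tstar → (∀ s ∈ Set.Ico (0:ℝ) b, E s ≤ m) →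
      E b ≤ E 0 * Real.exp (c * b) := by
    intro b hb0 hbT hboot
    have hsub : Set.Icc (0:ℝ) b ⊆ Set.Ico 0 Tstar := fun s hs => ⟨hs.1, lt_of_le_of_lt hs.2 hbT⟩
    have key := le_gronwallBound_of_liminf_deriv_right_le (f' := deriv E)
      (hEc.mono hsub)
      (fun x hx => hslope x (⟨hx.1, lt_trans hx.2 hbT⟩))
      (le_refl (E 0))
      (fun x hx => hderiv x ⟨hx.1, lt_trans hx.2 hbT⟩ (hboot x hx))
      b ⟨hb0, le_refl b⟩
    rwa [gronwallBound_ε0, sub_zero] at key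
  -- bootstrap: E < m on [0, min T Tstar)
  have boot : ∀ t ∈ Set.Ico (0:ℝ) (min (Real.log 2 / c) Tstar), E t < m := by
    by_contra hcon
    push_neg at hcon
    obtain ⟨b, hb, hbm⟩ := hcon
    obtain ⟨hb0, hbT⟩ := hb
    have hbT' : b < Tstar := lt_of_lt_of_le hbT (min_le_right _ _)
    have hblog : b < Real.log 2 / c := lt_of_lt_of_le hbT (min_le_left _ _)
    set S : Set ℝ := Set.Icc 0 b ∩ {t | m ≤ E t} with hS_def
    have hSne : S.Nonempty := ⟨b, ⟨hb0, le_refl b⟩, hbm⟩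
    have hSbdd : BddBelow S := ⟨0, fun t ht => ht.1.1⟩
    have hSclosed : IsClosed S := by
      have : ContinuousOn E (Set.Icc 0 b) :=
        hEc.mono (fun s hs => ⟨hs.1, lt_of_le_of_lt hs.2 hbT'⟩)
      exact ContinuousOn.preimage_isClosed_of_isClosed this isClosed_Icc isClosed_Ici
    set u := sInf S with hu_def
    have huS : u ∈ S := hSclosed.csInf_mem hSne hSbdd
    obtain ⟨⟨hu0, hub⟩, hum⟩ := huS
    have huT : u < Tstar := lt_of_le_of_lt hub hbT'
    have hboot : ∀ s ∈ Set.Ico (0:ℝ) u, E s ≤ m := by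
      intro s hs
      by_contra hsm
      push_neg at hsm
      have : s ∈ S := ⟨⟨hs.1, le_trans hs.2.le hub⟩, hsm.le⟩
      exact absurd (csInf_le hSbdd this) (not_le.mpr hs.2)
    have hgr := gron u hu0 huT hboot
    have hexp : Real.exp (c * u) < 2 := by
      rw [← Real.exp_log (zero_lt_two (α := ℝ))]
      apply Real.exp_lt_exp.mpr
      have : u < Real.log 2 / c := lt_of_le_of_lt hub hblog
      calc c * u < c * (Real.log 2 / c) := by
            exact mul_lt_mul_of_pos_left this hc
        _ = Real.log 2 := by field_simp
    have hexp_pos : 0 < Real.exp (c * u) := Real.exp_pos _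
    have hum' : m ≤ E u := hum
    rcases eq_or_lt_of_le hE00 with h0 | h0
    · -- E 0 = 0
      have : E u ≤ 0 := by rw [← h0, zero_mul] at hgr; exact hgr
      linarith
    · have h2 : E 0 * Real.exp (c * u) < 2 * E 0 := by
        have := mul_lt_mul_of_pos_left hexp h0
        linarith
      have h3 : 2 * E 0 ≤ m := le_min (by linarith) (by linarith)
      linarith
  -- conclusion
  intro t ht
  obtain ⟨ht0, htT⟩ := ht
  have htT' : t < Tstar := lt_of_lt_of_le htT (min_le_right _ _)
  have hgr := gron t ht0 htT' (fun s hs => (boot s ⟨hs.1, lt_trans hs.2 htT⟩).le)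
  have hexp2 : Real.exp (c * t) ≤ 2 := by
    rw [← Real.exp_log (zero_lt_two (α := ℝ))]
    apply Real.exp_le_exp.mpr
    have h6 : t < Real.log 2 / c := lt_of_lt_of_le htT (min_le_left _ _)
    have := (lt_div_iff₀ hc).mp h6
    linarith
  have h1 : Real.exp (2 * C₀ * t) ≥ 1 := Real.one_le_exp (by positivity)
  have h2 : E 0 * Real.exp (c * t) ≤ 2 * ε ^ 2 := by
    have h4 := mul_le_mul_of_nonneg_left hexp2 hE00
    have h5 := mul_le_mul_of_nonneg_right hE0 (Real.exp_pos (c*t)).le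
    nlinarith [Real.exp_pos (c*t)]
  nlinarith [hgr, h2, h1, hε2]
end
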